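/- Let B, C > 0, let q be a probability density on ℝ supported in [−B,B], and let p_T be a probability density on ℝ supported in [−C,C]. Extend F to α = 1 by F(1) = 0, where for α ∈ (0,1), F(α) = −∫_ℝ p_T(x) log H(α,x) dx. Then F is differentiable at α = 1 from within (0,1], with derivative F'(1) = (∫_ℝ ν q(ν) dν) · (∫_ℝ x p_T(x) dx), i.e. F'(1) equals the product of the mean of q and the mean of p_T. -/

import Mathlib

open MeasureTheory Real Filter
open scoped ENNReal Topology

/-- The correction factor `H(α,x) = ∫ ν, exp(-(1/(2α²))((1-α)² ν² - 2(1-α) x ν)) q(ν) dν`. -/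
noncomputable def Hfun (q : ℝ → ℝ) (α x : ℝ) : ℝ :=
  ∫ ν : ℝ, Real.exp (-(1 / (2 * α ^ 2)) * ((1 - α) ^ 2 * ν ^ 2 - 2 * (1 - α) * x * ν)) * q ν

/-- `F(α) = -∫ p_T(x) log H(α,x) dx` for `α ∈ (0,1)`, extended by `F(1) = 0`. -/
noncomputable def Ffun (q pT : ℝ → ℝ) (α : ℝ) : ℝ :=
  if α = 1 then 0 else -∫ x : ℝ, pT x * Real.log (Hfun q α x)

/-!
At `α = 1` the exponent vanishes, so `H(1, ·) = 1`, which makes `F(1) = 0` consistent with the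
integral formula, and its `α`-derivative there is `-x ν`, so `∂_α H(1, x) = -x · E_q[ν]`.
Both differentiations under the integral sign are dominated: on the compact set
`α ∈ [1/2, 3/2]`, `x ∈ [-C, C]`, `ν ∈ [-B, B]` the exponent and its `α`-derivative are bounded
by some `L`, so `H ≥ exp (-L)` and `|∂_α H| ≤ L exp L` there.
-/

open Set Function Metric

section ParametricIntegral

variable {q f : ℝ → ℝ} {c : ℝ}

lemma norm_mul_le_of_abs_le_on_support (hf : ∀ ν ∈ support q, |f ν| ≤ c) (ν : ℝ) :
    ‖f ν * q ν‖ ≤ c * ‖q ν‖ := by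
  by_cases hν : q ν = 0
  · simp [hν]
  · rw [norm_mul, Real.norm_eq_abs]
    exact mul_le_mul_of_nonneg_right (hf ν hν) (norm_nonneg _)

lemma integrable_mul_of_abs_le_on_support (hq : Integrable q) (hf_meas : AEStronglyMeasurable f)
    (hf : ∀ ν ∈ support q, |f ν| ≤ c) : Integrable fun ν => f ν * q ν :=
  (hq.norm.const_mul c).mono' (hf_meas.mul hq.aestronglyMeasurable)
    (ae_of_all _ (norm_mul_le_of_abs_le_on_support hf))

lemma hasDerivAt_integral_mul_of_abs_deriv_le {f f' : ℝ → ℝ → ℝ} {α₀ r M : ℝ} (hr : 0 < r)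
    (hq : Integrable q) (hf_meas : ∀ α ∈ ball α₀ r, AEStronglyMeasurable (f α))
    (hf_int : Integrable fun ν => f α₀ ν * q ν) (hf'_meas : AEStronglyMeasurable (f' α₀))
    (hf' : ∀ α ∈ ball α₀ r, ∀ ν ∈ support q, |f' α ν| ≤ M)
    (hderiv : ∀ α ∈ ball α₀ r, ∀ ν ∈ support q, HasDerivAt (f · ν) (f' α ν) α) :
    HasDerivAt (fun α => ∫ ν, f α ν * q ν) (∫ ν, f' α₀ ν * q ν) α₀ := by
  refine (hasDerivAt_integral_of_dominated_loc_of_deriv_le (ball_mem_nhds α₀ hr)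
    (eventually_of_mem (ball_mem_nhds α₀ hr) fun α hα => (hf_meas α hα).mul hq.1) hf_int
    (hf'_meas.mul hq.1) (bound := fun ν => M * ‖q ν‖)
    (ae_of_all _ fun ν α hα => norm_mul_le_of_abs_le_on_support (hf' α hα) ν)
    (hq.norm.const_mul M) (ae_of_all _ fun ν α hα => ?_)).2
  by_cases hν : q ν = 0
  · simpa [hν] using hasDerivAt_const α (0 : ℝ)
  · exact (hderiv α hα ν hν).mul_const (q ν)

end ParametricIntegral

namespace Hfun

noncomputable def exponent (α x ν : ℝ) : ℝ :=
  -(1 / (2 * α ^ 2)) * ((1 - α) ^ 2 * ν ^ 2 - 2 * (1 - α) * x * ν)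

noncomputable def exponentDeriv (α x ν : ℝ) : ℝ :=
  ((1 - α) * ν ^ 2 + (α - 2) * x * ν) / α ^ 3

lemma hasDerivAt_exponent (x ν : ℝ) {α : ℝ} (hα : α ≠ 0) :
    HasDerivAt (exponent · x ν) (exponentDeriv α x ν) α := by
  have hinv : HasDerivAt (fun a : ℝ => -(2 * a ^ 2)⁻¹) (1 / α ^ 3) α :=
    (((hasDerivAt_pow 2 α).const_mul 2).inv (by positivity)).neg.congr_deriv
      (by field_simp; ring)
  have hpoly : HasDerivAt (fun a : ℝ => (1 - a) ^ 2 * ν ^ 2 - 2 * (1 - a) * x * ν)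
      (2 * x * ν - 2 * (1 - α) * ν ^ 2) α := by
    have h₁ := (hasDerivAt_id α).const_sub 1
    exact (((h₁.pow 2).mul_const (ν ^ 2)).sub ((h₁.const_mul 2).mul_const x |>.mul_const ν))
      |>.congr_deriv (by simp; ring)
  refine (hinv.mul hpoly).congr_deriv ?_ |>.congr_of_eventuallyEq (.of_forall fun a => ?_)
  · simp only [exponentDeriv]; field_simp; ring
  · simp [exponent]

lemma continuousOn_exponent :
    ContinuousOn (fun p : ℝ × ℝ × ℝ => exponent p.1 p.2.1 p.2.2) {p | p.1 ≠ 0} := by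
  unfold exponent
  fun_prop (disch := simp_all)

lemma continuousOn_exponentDeriv :
    ContinuousOn (fun p : ℝ × ℝ × ℝ => exponentDeriv p.1 p.2.1 p.2.2) {p | p.1 ≠ 0} := by
  unfold exponentDeriv
  fun_prop (disch := simp_all)

lemma exponent_one (x ν : ℝ) : exponent 1 x ν = 0 := by
  simp [exponent]

lemma exponentDeriv_one (x ν : ℝ) : exponentDeriv 1 x ν = -(x * ν) := by
  simp only [exponentDeriv]
  ring

lemma pos_of_mem_closedBall_one_half {α : ℝ} (hα : α ∈ closedBall (1 : ℝ) (1 / 2)) : 0 < α := by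
  rw [mem_closedBall, Real.dist_eq, abs_le] at hα
  linarith [hα.1]

lemma exists_abs_exponent_le (B C : ℝ) : ∃ L, 0 ≤ L ∧ ∀ α ∈ closedBall (1 : ℝ) (1 / 2),
    ∀ x ∈ Icc (-C) C, ∀ ν ∈ Icc (-B) B, |exponent α x ν| ≤ L ∧ |exponentDeriv α x ν| ≤ L := by
  have hK := (isCompact_closedBall (1 : ℝ) (1 / 2)).prod
    ((isCompact_Icc (a := -C) (b := C)).prod (isCompact_Icc (a := -B) (b := B)))
  have hK₀ : closedBall (1 : ℝ) (1 / 2) ×ˢ Icc (-C) C ×ˢ Icc (-B) B ⊆ {p | p.1 ≠ 0} :=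
    fun p hp => (pos_of_mem_closedBall_one_half hp.1).ne'
  obtain ⟨L₁, hL₁⟩ := hK.exists_bound_of_continuousOn (continuousOn_exponent.mono hK₀)
  obtain ⟨L₂, hL₂⟩ := hK.exists_bound_of_continuousOn (continuousOn_exponentDeriv.mono hK₀)
  refine ⟨max (max L₁ L₂) 0, le_max_right _ _, fun α hα x hx ν hν => ⟨?_, ?_⟩⟩
  · exact (hL₁ (α, x, ν) ⟨hα, hx, hν⟩).trans ((le_max_left _ _).trans (le_max_left _ _))
  · exact (hL₂ (α, x, ν) ⟨hα, hx, hν⟩).trans ((le_max_right _ _).trans (le_max_left _ _))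

end Hfun

open Hfun

noncomputable def HfunDeriv (q : ℝ → ℝ) (α x : ℝ) : ℝ :=
  ∫ ν, exp (exponent α x ν) * exponentDeriv α x ν * q ν

section Bounds

variable {q : ℝ → ℝ} {B C L α x : ℝ}
  (hL : ∀ α ∈ closedBall (1 : ℝ) (1 / 2), ∀ x ∈ Icc (-C) C, ∀ ν ∈ Icc (-B) B,
    |exponent α x ν| ≤ L ∧ |exponentDeriv α x ν| ≤ L)
include hL

lemma abs_exp_exponent_mul_exponentDeriv_le {ν : ℝ} (hα : α ∈ closedBall (1 : ℝ) (1 / 2))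
    (hx : x ∈ Icc (-C) C) (hν : ν ∈ Icc (-B) B) :
    |exp (exponent α x ν) * exponentDeriv α x ν| ≤ exp L * L := by
  obtain ⟨h₁, h₂⟩ := hL α hα x hx ν hν
  rw [abs_mul, abs_exp]
  exact mul_le_mul (exp_le_exp.2 ((le_abs_self _).trans h₁)) h₂ (abs_nonneg _) (exp_pos _).le

variable (hq_supp : support q ⊆ Icc (-B) B)
include hq_supp

lemma integrable_exp_exponent_mul (hq : Integrable q) (hα : α ∈ closedBall (1 : ℝ) (1 / 2))
    (hx : x ∈ Icc (-C) C) : Integrable fun ν => exp (exponent α x ν) * q ν :=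
  integrable_mul_of_abs_le_on_support hq
    (Continuous.aestronglyMeasurable (by unfold exponent; fun_prop)) fun ν hν => by
      rw [abs_exp, exp_le_exp]
      exact (le_abs_self _).trans (hL α hα x hx ν (hq_supp hν)).1

lemma exp_neg_le_Hfun (hq : Integrable q) (hq_nonneg : ∀ ν, 0 ≤ q ν) (hq_one : ∫ ν, q ν = 1)
    (hα : α ∈ closedBall (1 : ℝ) (1 / 2)) (hx : x ∈ Icc (-C) C) : exp (-L) ≤ Hfun q α x := by
  calc exp (-L) = ∫ ν, exp (-L) * q ν := by rw [integral_const_mul, hq_one, mul_one]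
    _ ≤ ∫ ν, exp (exponent α x ν) * q ν := by
      refine integral_mono (hq.const_mul _)
        (integrable_exp_exponent_mul hL hq_supp hq hα hx) fun ν => ?_
      by_cases hν : q ν = 0
      · simp [hν]
      · refine mul_le_mul_of_nonneg_right (exp_le_exp.2 ?_) (hq_nonneg ν)
        exact neg_le_of_abs_le (hL α hα x hx ν (hq_supp hν)).1

lemma abs_HfunDeriv_le (hq : Integrable q) (hq_nonneg : ∀ ν, 0 ≤ q ν) (hq_one : ∫ ν, q ν = 1)
    (hα : α ∈ closedBall (1 : ℝ) (1 / 2)) (hx : x ∈ Icc (-C) C) :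
    |HfunDeriv q α x| ≤ exp L * L := by
  have h := norm_integral_le_of_norm_le (hq.norm.const_mul (exp L * L))
    (ae_of_all _ (norm_mul_le_of_abs_le_on_support fun ν hν =>
      abs_exp_exponent_mul_exponentDeriv_le hL hα hx (hq_supp hν)))
  simp only [Real.norm_of_nonneg (hq_nonneg _), integral_const_mul, hq_one, mul_one] at h
  exact h

lemma hasDerivAt_Hfun (hq : Integrable q) (hα : α ∈ ball (1 : ℝ) (1 / 4)) (hx : x ∈ Icc (-C) C) :
    HasDerivAt (Hfun q · x) (HfunDeriv q α x) α := by
  have hball : ball α (1 / 4) ⊆ closedBall (1 : ℝ) (1 / 2) := by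
    intro a ha
    rw [mem_ball, Real.dist_eq] at hα ha
    rw [mem_closedBall, Real.dist_eq]
    linarith [abs_sub_le a α 1]
  refine hasDerivAt_integral_mul_of_abs_deriv_le (f := fun a ν => exp (exponent a x ν))
    (f' := fun a ν => exp (exponent a x ν) * exponentDeriv a x ν) (M := exp L * L)
    (r := 1 / 4) (by norm_num) hq
    (fun a _ => Continuous.aestronglyMeasurable (by unfold exponent; fun_prop))
    (integrable_exp_exponent_mul hL hq_supp hq (hball (mem_ball_self (by norm_num))) hx)
    (Continuous.aestronglyMeasurable (by unfold exponent exponentDeriv; fun_prop))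
    (fun a ha ν hν => abs_exp_exponent_mul_exponentDeriv_le hL (hball ha) hx (hq_supp hν))
    fun a ha ν _ => (hasDerivAt_exponent x ν (pos_of_mem_closedBall_one_half (hball ha)).ne').exp

end Bounds

section AtOne

variable {q : ℝ → ℝ}

lemma Hfun_one (hq_one : ∫ ν, q ν = 1) (x : ℝ) : Hfun q 1 x = 1 := by
  simp [Hfun, hq_one]

lemma HfunDeriv_one (x : ℝ) : HfunDeriv q 1 x = -(x * ∫ ν, ν * q ν) := by
  simp only [HfunDeriv, exponent_one, exponentDeriv_one, exp_zero, one_mul]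
  rw [← integral_const_mul, ← integral_neg]
  congr 1 with ν
  ring

end AtOne

lemma aestronglyMeasurable_Hfun {q : ℝ → ℝ} (hq : AEStronglyMeasurable q) (α : ℝ) :
    AEStronglyMeasurable (Hfun q α) := by
  have h : Continuous fun z : ℝ × ℝ => exp (exponent α z.1 z.2) := by unfold exponent; fun_prop
  exact (h.aestronglyMeasurable.mul hq.comp_snd).integral_prod_right'

lemma hasDerivAt_integral_log_Hfun_mul {q p : ℝ → ℝ} {B C : ℝ} (hq : Integrable q)
    (hq_nonneg : ∀ ν, 0 ≤ q ν) (hq_one : ∫ ν, q ν = 1) (hq_supp : support q ⊆ Icc (-B) B)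
    (hp : Integrable p) (hp_supp : support p ⊆ Icc (-C) C) :
    HasDerivAt (fun α => ∫ x, log (Hfun q α x) * p x)
      (-((∫ ν, ν * q ν) * ∫ x, x * p x)) 1 := by
  obtain ⟨L, hL₀, hL⟩ := exists_abs_exponent_le B C
  have hball : ball (1 : ℝ) (1 / 4) ⊆ closedBall 1 (1 / 2) :=
    (ball_subset_ball (by norm_num)).trans ball_subset_closedBall
  have hHfun_pos : ∀ α ∈ ball (1 : ℝ) (1 / 4), ∀ x ∈ support p, 0 < Hfun q α x :=
    fun α hα x hx => (exp_pos _).trans_le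
      (exp_neg_le_Hfun hL hq_supp hq hq_nonneg hq_one (hball hα) (hp_supp hx))
  have h := hasDerivAt_integral_mul_of_abs_deriv_le (f := fun α x => log (Hfun q α x))
    (f' := fun α x => HfunDeriv q α x / Hfun q α x) (M := exp L * L / exp (-L))
    (by norm_num : (0 : ℝ) < 1 / 4) hp
    (fun α _ => (measurable_log.comp_aemeasurable
      (aestronglyMeasurable_Hfun hq.1 α).aemeasurable).aestronglyMeasurable)
    (by simp [Hfun_one hq_one])
    (by simp only [Hfun_one hq_one, HfunDeriv_one, div_one]; fun_prop)
    (fun α hα x hx => by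
      rw [abs_div, abs_of_pos (hHfun_pos α hα x hx)]
      exact div_le_div₀ (by positivity)
        (abs_HfunDeriv_le hL hq_supp hq hq_nonneg hq_one (hball hα) (hp_supp hx)) (exp_pos _)
        (exp_neg_le_Hfun hL hq_supp hq hq_nonneg hq_one (hball hα) (hp_supp hx)))
    (fun α hα x hx => (hasDerivAt_Hfun hL hq_supp hq hα (hp_supp hx)).log
      (hHfun_pos α hα x hx).ne')
  convert h using 1
  simp only [Hfun_one hq_one, HfunDeriv_one, div_one]
  rw [← integral_const_mul, ← integral_neg]
  congr 1 with x
  ring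

theorem statement11_general (B C : ℝ)
    (q : ℝ → ℝ) (hq_nonneg : ∀ x, 0 ≤ q x)
    (hq_one : ∫ x, q x = 1) (hq_supp : Function.support q ⊆ Set.Icc (-B) B)
    (pT : ℝ → ℝ)
    (hpT_one : ∫ x, pT x = 1) (hpT_supp : Function.support pT ⊆ Set.Icc (-C) C) :
    HasDerivWithinAt (Ffun q pT)
      ((∫ ν : ℝ, ν * q ν) * (∫ x : ℝ, x * pT x)) (Set.Ioc (0 : ℝ) 1) 1 := by
  have hF : Ffun q pT = fun α => -∫ x, log (Hfun q α x) * pT x := by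
    funext α
    by_cases hα : α = 1
    · simp [Ffun, hα, Hfun_one hq_one]
    · simp only [Ffun, hα, if_false, mul_comm (pT _)]
  have h := hasDerivAt_integral_log_Hfun_mul
    (Integrable.of_integral_ne_zero (hq_one ▸ one_ne_zero)) hq_nonneg hq_one hq_supp
    (Integrable.of_integral_ne_zero (hpT_one ▸ one_ne_zero)) hpT_supp
  rw [hF, ← neg_neg ((∫ ν, ν * q ν) * _)]
  exact h.neg.hasDerivWithinAt

/-- If `q` is a probability density supported in `[-B,B]` and `p_T` a probability density
supported in `[-C,C]`, then `F`, extended by `F(1) = 0`, is differentiable at `α = 1` from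
within `(0,1]` with derivative `F'(1) = (∫ ν q(ν) dν)·(∫ x p_T(x) dx)`, the product of the
means of `q` and `p_T`. -/
theorem statement11 (B C : ℝ) (hB : 0 < B) (hC : 0 < C)
    (q : ℝ → ℝ) (hq_meas : Measurable q) (hq_nonneg : ∀ x, 0 ≤ q x)
    (hq_one : ∫ x, q x = 1) (hq_supp : Function.support q ⊆ Set.Icc (-B) B)
    (pT : ℝ → ℝ) (hpT_meas : Measurable pT) (hpT_nonneg : ∀ x, 0 ≤ pT x)
    (hpT_one : ∫ x, pT x = 1) (hpT_supp : Function.support pT ⊆ Set.Icc (-C) C) :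
    HasDerivWithinAt (Ffun q pT)
      ((∫ ν : ℝ, ν * q ν) * (∫ x : ℝ, x * pT x)) (Set.Ioc (0 : ℝ) 1) 1 :=
  statement11_general B C q hq_nonneg hq_one hq_supp pT hpT_one hpT_supp
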